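/- arXiv:2001.04173 — 8 statements merged into one kernel-verified Lean document; each statement's English description precedes it below -/
import Mathlib

section
/- For all real x, y ≥ 1 and every ε ∈ (0,1), one has x·y ≤ x·log(e + x) + e^((1+ε)·y). -/
open Real

/-- Young's inequality for the conjugate pair `x log x - x` and `exp`. -/
theorem Real.mul_le_mul_log_sub_add_exp {x : ℝ} (hx : 0 ≤ x) (y : ℝ) :
    x * y ≤ x * log x - x + exp y := by
  rcases hx.eq_or_lt with rfl | hx
  · simpa using (exp_pos y).le
  calc x * y = x * (y - log x + 1) + x * log x - x := by ring
    _ ≤ x * exp (y - log x) + x * log x - x := by gcongr; exact add_one_le_exp _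
    _ = x * log x - x + exp y := by rw [exp_sub, exp_log hx]; field_simp; ring

theorem stmt1_general (x y ε : ℝ) (hx : 1 ≤ x) (hy : 1 ≤ y) (hε : 0 < ε) :
    x * y ≤ x * Real.log (Real.exp 1 + x) + Real.exp ((1 + ε) * y) := by
  have hx0 : 0 < x := by linarith
  calc x * y ≤ x * log x - x + exp y := mul_le_mul_log_sub_add_exp hx0.le y
    _ ≤ x * log (exp 1 + x) + exp y := by
      have : log x ≤ log (exp 1 + x) := log_le_log hx0 (by linarith [exp_pos 1])
      nlinarith
    _ ≤ x * log (exp 1 + x) + exp ((1 + ε) * y) := by gcongr; nlinarith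

theorem stmt1 (x y ε : ℝ) (hx : 1 ≤ x) (hy : 1 ≤ y) (hε : 0 < ε) (hε' : ε < 1) :
    x * y ≤ x * Real.log (Real.exp 1 + x) + Real.exp ((1 + ε) * y) :=
  stmt1_general x y ε hx hy hε
end

section
/- Let W and h be nonnegative measurable functions on the unit disk D in the plane with W(z) ≤ 1 for all z, and let ε₀ ∈ (0, 1/2), α > 0, C > 0 be constants. Assume that for every ε with 0 < ε < ε₀ one has ∫_D W(z)^ε · h(z) dm(z) ≤ C / ε^α. Then there exists a constant C₁, depending only on ε₀, α, and C, such that for every η with 0 < η ≤ 1, ∫_D h(z) / (log(e + 1/W(z)))^(α+η) dm(z) ≤ C₁ / η. -/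
/-!
Split the disk according to the dyadic size of `L = log (e + 1 / W)`. Where
`2 ^ k ≤ L < 2 ^ (k + 1)`, take `ε = c / 2 ^ k` with `c = ε₀ / 2`: since `W ≥ exp (-L)`, we get
`W ^ ε ≥ exp (-2 c) ≥ exp (-1)`, hence `h / L ^ (α + η) ≤ e 2 ^ (-k (α + η)) W ^ ε h`. Integrating
against the hypothesis bounds the `k`-th piece by `e C c ^ (-α) 2 ^ (-k η)`, and the geometric
series sums to a constant times `1 / (1 - 2 ^ (-η)) ≲ 1 / η`.
-/

open Real MeasureTheory

noncomputable def logWeight (w : ℝ) : ℝ := log (exp 1 + 1 / w)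

lemma one_le_logWeight {w : ℝ} (hw : 0 ≤ w) : 1 ≤ logWeight w := by
  calc (1 : ℝ) = log (exp 1) := (log_exp 1).symm
    _ ≤ logWeight w :=
        log_le_log (exp_pos 1) (le_add_of_nonneg_right (one_div_nonneg.mpr hw))

lemma exp_neg_mul_logWeight_le_rpow {w : ℝ} (hw : 0 < w) (ε : ℝ) (hε : 0 ≤ ε) :
    exp (-(ε * logWeight w)) ≤ w ^ ε := by
  have hlog : -log w ≤ logWeight w := by
    rw [← log_inv, inv_eq_one_div]
    exact log_le_log (by positivity) (le_add_of_nonneg_left (exp_pos 1).le)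
  rw [rpow_def_of_pos hw, exp_le_exp]
  nlinarith

/-- Via `log x ≤ x ^ δ / δ` with `δ = ε / s`. -/
lemma rpow_mul_logWeight_rpow_le {w : ℝ} (hw : 0 < w) (hw1 : w ≤ 1) {ε s : ℝ} (hε : 0 < ε)
    (hs : 0 < s) : w ^ ε * logWeight w ^ s ≤ (exp 1 + 1) ^ ε * (s / ε) ^ s := by
  have hx : 0 < exp 1 + 1 / w := by positivity
  have hL : logWeight w ≤ (exp 1 + 1 / w) ^ (ε / s) / (ε / s) :=
    log_le_rpow_div hx.le (by positivity)
  have hLs : logWeight w ^ s ≤ (exp 1 + 1 / w) ^ ε * (s / ε) ^ s := by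
    calc logWeight w ^ s ≤ ((exp 1 + 1 / w) ^ (ε / s) / (ε / s)) ^ s :=
          rpow_le_rpow (one_le_logWeight hw.le |>.trans' zero_le_one) hL hs.le
      _ = (exp 1 + 1 / w) ^ ε * (s / ε) ^ s := by
          rw [div_rpow (by positivity) (by positivity), ← rpow_mul hx.le,
            div_mul_cancel₀ _ hs.ne', div_eq_mul_inv, ← inv_rpow (by positivity), inv_div]
  have hprod : w * (exp 1 + 1 / w) ≤ exp 1 + 1 := by
    rw [mul_add, mul_one_div_cancel hw.ne']
    nlinarith [exp_pos 1]
  calc w ^ ε * logWeight w ^ s ≤ w ^ ε * ((exp 1 + 1 / w) ^ ε * (s / ε) ^ s) := by gcongr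
    _ = (w * (exp 1 + 1 / w)) ^ ε * (s / ε) ^ s := by
          rw [mul_rpow hw.le hx.le, mul_assoc]
    _ ≤ (exp 1 + 1) ^ ε * (s / ε) ^ s := by gcongr

lemma rpow_mul_le_mul_ite {w h ε s : ℝ} (hw : 0 ≤ w) (hw1 : w ≤ 1) (hh : 0 ≤ h) (hε : 0 < ε)
    (hs : 0 < s) :
    w ^ ε * h ≤ (exp 1 + 1) ^ ε * (s / ε) ^ s * (if w = 0 then 0 else h / logWeight w ^ s) := by
  split_ifs with hw0
  · simp [hw0, zero_rpow hε.ne']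
  have hLs : 0 < logWeight w ^ s := rpow_pos_of_pos (by linarith [one_le_logWeight hw]) s
  calc w ^ ε * h = w ^ ε * logWeight w ^ s * (h / logWeight w ^ s) := by field_simp
    _ ≤ (exp 1 + 1) ^ ε * (s / ε) ^ s * (h / logWeight w ^ s) :=
        mul_le_mul_of_nonneg_right
          (rpow_mul_logWeight_rpow_le (lt_of_le_of_ne hw (Ne.symm hw0)) hw1 hε hs) (by positivity)

/-- On the dyadic shell `2 ^ k ≤ logWeight w < 2 ^ (k + 1)` the exponent `c / 2 ^ k` keeps
`w ^ (c / 2 ^ k)` above `exp (-1)`. -/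
lemma exists_ite_div_logWeight_rpow_le {w h c s : ℝ} (hw : 0 ≤ w) (hh : 0 ≤ h) (hc : 0 ≤ c)
    (hc1 : c ≤ 1 / 2) (hs : 0 ≤ s) : ∃ k : ℕ,
      (if w = 0 then 0 else h / logWeight w ^ s) ≤
        exp 1 * (((2 : ℝ) ^ k) ^ s)⁻¹ * (w ^ (c / 2 ^ k) * h) := by
  split_ifs with hw0
  · exact ⟨0, by positivity⟩
  obtain ⟨k, hk, hk'⟩ := exists_nat_pow_near (one_le_logWeight hw) one_lt_two
  refine ⟨k, ?_⟩
  have h2k : (0 : ℝ) < 2 ^ k := by positivity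
  have hexp : c / 2 ^ k * logWeight w ≤ 1 := by
    rw [div_mul_eq_mul_div, div_le_one h2k]
    nlinarith [pow_succ (2 : ℝ) k]
  have hone : 1 ≤ exp 1 * w ^ (c / 2 ^ k) := by
    calc (1 : ℝ) = exp 1 * exp (-1) := by rw [← exp_add]; norm_num
      _ ≤ exp 1 * exp (-(c / 2 ^ k * logWeight w)) := by gcongr
      _ ≤ exp 1 * w ^ (c / 2 ^ k) := by
          gcongr
          exact exp_neg_mul_logWeight_le_rpow (lt_of_le_of_ne hw (Ne.symm hw0)) _ (by positivity)
  calc h / logWeight w ^ s ≤ h / ((2 : ℝ) ^ k) ^ s := by gcongr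
    _ ≤ exp 1 * w ^ (c / 2 ^ k) * (h / ((2 : ℝ) ^ k) ^ s) :=
        le_mul_of_one_le_left (by positivity) hone
    _ = exp 1 * (((2 : ℝ) ^ k) ^ s)⁻¹ * (w ^ (c / 2 ^ k) * h) := by ring

lemma dyadic_weight_eq {c : ℝ} (hc : 0 < c) (α η C : ℝ) (k : ℕ) :
    exp 1 * (((2 : ℝ) ^ k) ^ (α + η))⁻¹ * (C / (c / 2 ^ k) ^ α) =
      exp 1 * C / c ^ α * ((2 ^ η)⁻¹) ^ k := by
  have h2k : (0 : ℝ) < 2 ^ k := by positivity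
  rw [rpow_add h2k, div_rpow hc.le h2k.le, inv_pow, rpow_pow_comm zero_le_two η k]
  have : 0 < ((2 : ℝ) ^ k) ^ α := rpow_pos_of_pos h2k α
  have : 0 < c ^ α := rpow_pos_of_pos hc α
  field_simp

lemma inv_one_sub_inv_two_rpow_le {η : ℝ} (hη : 0 < η) (hη1 : η ≤ 1) :
    (1 - (2 ^ η : ℝ)⁻¹)⁻¹ ≤ 2 / (log 2 * η) := by
  have hlow : 1 + η * log 2 ≤ 2 ^ η := by
    rw [rpow_def_of_pos two_pos]
    linarith [add_one_le_exp (log 2 * η)]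
  have hup : (2 : ℝ) ^ η ≤ 2 := by
    simpa using rpow_le_rpow_of_exponent_le one_le_two hη1
  have hlog : 0 < log 2 := log_pos one_lt_two
  have hpos : 0 < η * log 2 := by positivity
  have ht : 0 < (2 : ℝ) ^ η := by positivity
  rw [show 1 - ((2 : ℝ) ^ η)⁻¹ = (2 ^ η - 1) / 2 ^ η by field_simp, inv_div,
    div_le_div_iff₀ (by linarith) (by positivity)]
  nlinarith

section

variable {X : Type*} [MeasurableSpace X] {μ : Measure X}

theorem integral_le_tsum_integral_of_forall_exists_le {f : X → ℝ} {g : ℕ → X → ℝ}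
    (hf : ∀ x, 0 ≤ f x) (hfm : AEStronglyMeasurable f μ) (hg : ∀ k x, 0 ≤ g k x)
    (hgi : ∀ k, Integrable (g k) μ)
    (hsum : Summable fun k => ∫ x, g k x ∂μ) (hfg : ∀ x, ∃ k, f x ≤ g k x) :
    ∫ x, f x ∂μ ≤ ∑' k, ∫ x, g k x ∂μ := by
  rw [integral_eq_lintegral_of_nonneg_ae (ae_of_all _ hf) hfm]
  refine ENNReal.toReal_le_of_le_ofReal (tsum_nonneg fun k => integral_nonneg (hg k)) ?_
  calc ∫⁻ x, ENNReal.ofReal (f x) ∂μ ≤ ∫⁻ x, ∑' k, ENNReal.ofReal (g k x) ∂μ := by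
        refine lintegral_mono fun x => ?_
        obtain ⟨k, hk⟩ := hfg x
        exact (ENNReal.ofReal_le_ofReal hk).trans (ENNReal.le_tsum k)
    _ = ∑' k, ENNReal.ofReal (∫ x, g k x ∂μ) := by
        rw [lintegral_tsum fun k => (hgi k).aemeasurable.ennreal_ofReal]
        exact tsum_congr fun k =>
          (ofReal_integral_eq_lintegral_ofReal (hgi k) (ae_of_all _ (hg k))).symm
    _ = ENNReal.ofReal (∑' k, ∫ x, g k x ∂μ) :=
        (ENNReal.ofReal_tsum_of_nonneg (fun k => integral_nonneg (hg k)) hsum).symm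

variable {W h : X → ℝ}

lemma integrable_rpow_mul_of_integrable_ite (hWm : Measurable W) (hhm : Measurable h)
    (hW0 : ∀ x, 0 ≤ W x) (hW1 : ∀ x, W x ≤ 1) (hh0 : ∀ x, 0 ≤ h x) {ε s : ℝ} (hε : 0 < ε)
    (hs : 0 < s)
    (hf : Integrable (fun x => if W x = 0 then 0 else h x / logWeight (W x) ^ s) μ) :
    Integrable (fun x => W x ^ ε * h x) μ := by
  refine (hf.const_mul ((exp 1 + 1) ^ ε * (s / ε) ^ s)).mono' (by fun_prop)
    (ae_of_all _ fun x => ?_)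
  rw [norm_of_nonneg (mul_nonneg (rpow_nonneg (hW0 x) _) (hh0 x))]
  exact rpow_mul_le_mul_ite (hW0 x) (hW1 x) (hh0 x) hε hs

theorem integral_ite_div_logWeight_rpow_le (hWm : Measurable W) (hhm : Measurable h)
    (hW0 : ∀ x, 0 ≤ W x) (hW1 : ∀ x, W x ≤ 1) (hh0 : ∀ x, 0 ≤ h x) {c α η C : ℝ} (hc : 0 < c)
    (hc1 : c ≤ 1 / 2) (hs : 0 < α + η) (hη : 0 < η) (hC : 0 ≤ C)
    (hyp : ∀ k : ℕ, ∫ x, W x ^ (c / 2 ^ k) * h x ∂μ ≤ C / (c / 2 ^ k) ^ α) :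
    ∫ x, (if W x = 0 then 0 else h x / logWeight (W x) ^ (α + η)) ∂μ ≤
      exp 1 * C / c ^ α * (1 - (2 ^ η)⁻¹)⁻¹ := by
  set f : X → ℝ := fun x => if W x = 0 then 0 else h x / logWeight (W x) ^ (α + η)
  set B := exp 1 * C / c ^ α
  have hr : (0 : ℝ) ≤ (2 ^ η)⁻¹ ∧ (2 ^ η : ℝ)⁻¹ < 1 :=
    ⟨by positivity, inv_lt_one_of_one_lt₀ (one_lt_rpow one_lt_two hη)⟩
  -- Without integrability of `f` the integral is the junk value `0`; with it, every `W ^ ε * h`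
  -- is integrable, so that `hyp` carries information.
  by_cases hf : Integrable f μ
  swap
  · rw [integral_undef hf]
    exact mul_nonneg (by positivity) (inv_nonneg.mpr (by linarith))
  set g : ℕ → X → ℝ := fun k x =>
    exp 1 * (((2 : ℝ) ^ k) ^ (α + η))⁻¹ * (W x ^ (c / 2 ^ k) * h x)
  have hg0 : ∀ k x, 0 ≤ g k x := fun k x => by
    have := hW0 x; have := hh0 x; positivity
  have hgi : ∀ k, Integrable (g k) μ := fun k =>
    (integrable_rpow_mul_of_integrable_ite hWm hhm hW0 hW1 hh0 (by positivity) hs hf).const_mul _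
  have hgk : ∀ k, ∫ x, g k x ∂μ ≤ B * ((2 ^ η)⁻¹) ^ k := fun k => by
    rw [integral_const_mul, ← dyadic_weight_eq hc]
    gcongr
    exact hyp k
  have hf0 : ∀ x, 0 ≤ f x := fun x => by
    simp only [f]
    split_ifs
    exacts [le_rfl,
      div_nonneg (hh0 x) (rpow_nonneg (zero_le_one.trans (one_le_logWeight (hW0 x))) _)]
  have hfm : Measurable f :=
    .ite (hWm (measurableSet_singleton 0)) measurable_const (by unfold logWeight; fun_prop)
  have hgeom := (summable_geometric_of_lt_one hr.1 hr.2).mul_left B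
  have hsum := hgeom.of_nonneg_of_le (fun k => integral_nonneg (hg0 k)) hgk
  calc ∫ x, f x ∂μ ≤ ∑' k, ∫ x, g k x ∂μ :=
        integral_le_tsum_integral_of_forall_exists_le hf0 hfm.aestronglyMeasurable hg0 hgi hsum
          fun x => exists_ite_div_logWeight_rpow_le (hW0 x) (hh0 x) hc.le hc1 hs.le
    _ ≤ ∑' k, B * ((2 ^ η)⁻¹) ^ k := hsum.tsum_le_tsum hgk hgeom
    _ = B * (1 - (2 ^ η)⁻¹)⁻¹ := by rw [tsum_mul_left, tsum_geometric_of_lt_one hr.1 hr.2]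

end

theorem stmt5 (W h : ℂ → ℝ) (hWm : Measurable W) (hhm : Measurable h)
    (hW0 : ∀ z, 0 ≤ W z) (hW1 : ∀ z, W z ≤ 1) (hh0 : ∀ z, 0 ≤ h z)
    (ε₀ α C : ℝ) (hε₀ : ε₀ ∈ Set.Ioo (0:ℝ) (1/2)) (hα : 0 < α) (hC : 0 < C)
    (hyp : ∀ ε : ℝ, 0 < ε → ε < ε₀ →
      ∫ z in Metric.ball (0:ℂ) 1, W z ^ ε * h z ≤ C / ε ^ α) :
    ∃ C₁ : ℝ, ∀ η : ℝ, 0 < η → η ≤ 1 →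
      ∫ z in Metric.ball (0:ℂ) 1,
        (if W z = 0 then 0 else h z / (Real.log (Real.exp 1 + 1 / W z)) ^ (α + η))
        ≤ C₁ / η := by
  obtain ⟨hε₀pos, hε₀half⟩ := hε₀
  have hlog2 : 0 < log 2 := log_pos one_lt_two
  refine ⟨2 * (exp 1 * C / (ε₀ / 2) ^ α) / log 2, fun η hη hη1 => ?_⟩
  have hε : ∀ k : ℕ, 0 < ε₀ / 2 / 2 ^ k ∧ ε₀ / 2 / 2 ^ k < ε₀ := fun k =>
    ⟨by positivity, (div_le_self (by positivity) (one_le_pow₀ one_le_two)).trans_lt (by linarith)⟩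
  calc _ ≤ exp 1 * C / (ε₀ / 2) ^ α * (1 - (2 ^ η)⁻¹)⁻¹ :=
        integral_ite_div_logWeight_rpow_le hWm hhm hW0 hW1 hh0 (by positivity) (by linarith)
          (by positivity) hη hC.le fun k => hyp _ (hε k).1 (hε k).2
    _ ≤ exp 1 * C / (ε₀ / 2) ^ α * (2 / (log 2 * η)) := by
        gcongr
        exact inv_one_sub_inv_two_rpow_le hη hη1
    _ = 2 * (exp 1 * C / (ε₀ / 2) ^ α) / log 2 / η := by field_simp
end

section
/- Let ε ∈ (0, 1/2) and let K, K' be real numbers with K ≥ 1 and K' ≥ 1 related by: K' = (1 + t^(1+ε))/(1 − t^(1+ε)) and K = (1 + t)/(1 − t) for some t ∈ [0, 1). Then K' ≤ K/(1 + ε/2) + 4. -/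
/-!
Write `K' = 2 / (1 - t ^ (1 + ε)) - 1`. For `t < 1/2` we have `t ^ (1 + ε) ≤ t < 1/2`, so `K' < 3`.
For `t ≥ 1/2`, convexity of `x ↦ x ^ (1 + ε)` on the chord from `1/2` to `1`, together with
Bernoulli's bound `(1/2) ^ ε ≤ 1 - ε/2`, gives `1 - t ^ (1 + ε) ≥ (1 + ε/2) (1 - t)`, whence
`K' ≤ (K + 1) / (1 + ε/2) - 1`.
-/

open Real

lemma one_add_div_one_sub_le {s a : ℝ} (ha : 0 < a) (h : a ≤ 1 - s) :
    (1 + s) / (1 - s) ≤ 2 / a - 1 := by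
  have hs : 1 - s ≠ 0 := by linarith
  calc (1 + s) / (1 - s) = 2 / (1 - s) - 1 := by field_simp; ring
    _ ≤ 2 / a - 1 := by gcongr

lemma half_rpow_le {ε : ℝ} (hε0 : 0 ≤ ε) (hε1 : ε ≤ 1) : (1 / 2 : ℝ) ^ ε ≤ 1 - ε / 2 := by
  have h := rpow_one_add_le_one_add_mul_self (s := -1 / 2) (by norm_num) hε0 hε1
  norm_num at h ⊢
  linarith

lemma one_add_half_mul_one_sub_le_one_sub_rpow {ε t : ℝ} (hε0 : 0 ≤ ε) (hε1 : ε ≤ 1)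
    (ht : t ∈ Set.Icc (1 / 2 : ℝ) 1) :
    (1 + ε / 2) * (1 - t) ≤ 1 - t ^ (1 + ε) := by
  obtain ⟨ht0, ht1⟩ := ht
  have hchord : t ^ (1 + ε) ≤ 2 * (1 - t) * (1 / 2) ^ (1 + ε) + (2 * t - 1) := by
    have h := (convexOn_rpow (p := 1 + ε) (by linarith)).2
      (Set.mem_Ici.2 (by norm_num : (0 : ℝ) ≤ 1 / 2)) (Set.mem_Ici.2 zero_le_one)
      (by linarith : 0 ≤ 2 * (1 - t)) (by linarith : 0 ≤ 2 * t - 1) (by ring)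
    have hmid : 2 * (1 - t) * (1 / 2) + (2 * t - 1) = t := by ring
    simpa only [smul_eq_mul, one_rpow, mul_one, hmid] using h
  have hhalf : (1 / 2 : ℝ) ^ (1 + ε) ≤ 1 / 2 * (1 - ε / 2) := by
    rw [rpow_add (by norm_num), rpow_one]
    gcongr
    exact half_rpow_le hε0 hε1
  nlinarith [mul_le_mul_of_nonneg_left hhalf (by linarith : 0 ≤ 2 * (1 - t))]

theorem stmt9_general (ε t K K' : ℝ) (hε : ε ∈ Set.Ioo (0:ℝ) (1/2))
    (ht : t ∈ Set.Ico (0:ℝ) 1) (hK : 1 ≤ K)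
    (hKdef : K = (1 + t) / (1 - t))
    (hK'def : K' = (1 + t ^ (1 + ε)) / (1 - t ^ (1 + ε))) :
    K' ≤ K / (1 + ε/2) + 4 := by
  obtain ⟨hε0, hε2⟩ := hε
  obtain ⟨ht0, ht1⟩ := ht
  have hε' : 0 < 1 + ε / 2 := by linarith
  rcases lt_or_ge t (1 / 2) with hsmall | hlarge
  · have hpow : t ^ (1 + ε) ≤ t := by
      simpa using rpow_le_rpow_of_exponent_ge' ht0 ht1.le zero_le_one (by linarith : 1 ≤ 1 + ε)
    have hK'3 : K' ≤ 2 / (1 / 2) - 1 := hK'def ▸ one_add_div_one_sub_le (by norm_num) (by linarith)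
    have : 0 ≤ K / (1 + ε / 2) := by positivity
    linarith
  · have hkey := one_add_half_mul_one_sub_le_one_sub_rpow hε0.le (by linarith) ⟨hlarge, ht1.le⟩
    have hK' := hK'def ▸ one_add_div_one_sub_le (by nlinarith) hkey
    have h1t : 1 - t ≠ 0 := by linarith
    have hK2 : 2 / ((1 + ε / 2) * (1 - t)) = (K + 1) / (1 + ε / 2) := by
      rw [hKdef]; field_simp; ring
    have : (K + 1) / (1 + ε / 2) ≤ K / (1 + ε / 2) + 1 := by
      rw [add_div]; gcongr; exact div_le_one_of_le₀ (by linarith) hε'.le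
    linarith

theorem stmt9 (ε t K K' : ℝ) (hε : ε ∈ Set.Ioo (0:ℝ) (1/2))
    (ht : t ∈ Set.Ico (0:ℝ) 1) (hK : 1 ≤ K) (hK' : 1 ≤ K')
    (hKdef : K = (1 + t) / (1 - t))
    (hK'def : K' = (1 + t ^ (1 + ε)) / (1 - t ^ (1 + ε))) :
    K' ≤ K / (1 + ε/2) + 4 :=
  stmt9_general ε t K K' hε ht hK hKdef hK'def
end

section
/- For every 0 < β' < β < 1, every α ≥ 1, and every p > 0, there exists a constant C = C(p, β, β', α) such that for all real x, y ≥ 1: x·y·exp((log(e + x·y))^(β')) ≤ C·( exp(p·x^α) + y·exp((log(e + y))^β) ). -/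
/-!
Write `t = log x` and `L = log (e + y)`, so that `log (e + x y) ≤ t + L`. If `t ≤ L^β / 2`, then
`log (e + x y)^β' ≤ (2L)^β' ≤ L^β / 2 + O(1)` because `β' < β`, and the two halves of `L^β`
absorb `x ≤ exp (L^β / 2)` and the factor `exp (log (e + x y)^β')`. If `t > L^β / 2`, then
`L < (2t)^(1/β)` and the left side is at most `exp (2 (t + L))`; since `t + (2t)^(1/β)` is
`o(exp t)`, this is `O(exp (p exp t)) = O(exp (p x)) ≤ O(exp (p x^α))`.
-/

open Real Filter Asymptotics Set

theorem isLittleO_rpow_rpow_atTop {a b : ℝ} (hab : a < b) :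
    (fun x : ℝ => x ^ a) =o[atTop] fun x => x ^ b := by
  have hpos : ∀ᶠ x : ℝ in atTop, 0 < x := eventually_gt_atTop 0
  rw [isLittleO_iff_tendsto' (hpos.mono fun x hx h => absurd h (rpow_pos_of_pos hx b).ne')]
  refine (tendsto_rpow_neg_atTop (sub_pos.2 hab)).congr' (hpos.mono fun x hx => ?_)
  rw [neg_sub, rpow_sub hx]

theorem Asymptotics.IsLittleO.exists_le_mul_add {f g : ℝ → ℝ} {a c : ℝ} (h : f =o[atTop] g)
    (hf : MonotoneOn f (Ici a)) (hg : ∀ t ≥ a, 0 ≤ g t) (hc : 0 < c) :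
    ∃ A, ∀ t ≥ a, f t ≤ c * g t + A := by
  obtain ⟨T, hT⟩ := eventually_atTop.1 (h.bound hc)
  set T' := max a T
  refine ⟨|f T'|, fun t ht => ?_⟩
  have hcg : 0 ≤ c * g t := mul_nonneg hc.le (hg t ht)
  rcases le_total t T' with htT | hTt
  · have := hf ht (le_max_left a T) htT
    linarith [le_abs_self (f T')]
  · have := hT t ((le_max_right a T).trans hTt)
    rw [norm_of_nonneg (hg t ht)] at this
    linarith [le_norm_self (f t), abs_nonneg (f T')]

theorem exists_const_mul_rpow_le_half_rpow_add {β' β : ℝ} (hβ'0 : 0 ≤ β') (hβ'β : β' < β) :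
    ∃ A : ℝ, ∀ L : ℝ, L ≥ 0 → 2 ^ β' * L ^ β' ≤ L ^ β / 2 + A := by
  obtain ⟨A, hA⟩ := ((isLittleO_rpow_rpow_atTop hβ'β).const_mul_left (2 ^ β')).exists_le_mul_add
    (a := 0) (fun s hs t _ hst => by gcongr) (fun t _ => by positivity) one_half_pos
  exact ⟨A, fun L hL => by linarith [hA L hL]⟩

theorem exists_two_mul_add_rpow_le_mul_exp_add (q : ℝ) {p : ℝ} (hq : 0 ≤ q) (hp : 0 < p) :
    ∃ B : ℝ, ∀ t : ℝ, t ≥ 0 → 2 * (t + 2 ^ q * t ^ q) ≤ p * exp t + B :=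
  (((isLittleO_pow_exp_atTop.congr_left fun t => pow_one t).add
    ((isLittleO_rpow_exp_atTop q).const_mul_left (2 ^ q))).const_mul_left 2).exists_le_mul_add
    (a := 0) (fun s hs t _ hst => by dsimp only; gcongr) (fun t _ => (exp_pos t).le) hp

theorem one_le_log_exp_one_add {y : ℝ} (hy : 0 ≤ y) : 1 ≤ log (exp 1 + y) := by
  rw [le_log_iff_exp_le (by positivity)]
  linarith

theorem log_exp_one_add_mul_le {x y : ℝ} (hx : 1 ≤ x) (hy : 0 ≤ y) :
    log (exp 1 + x * y) ≤ log x + log (exp 1 + y) := by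
  rw [← log_mul (by positivity) (by positivity)]
  gcongr
  nlinarith [exp_pos 1]

section

variable {β' β x y : ℝ}

theorem mul_mul_exp_le_of_log_le (hβ' : 0 ≤ β') (hβ : β ≤ 1) {A : ℝ}
    (hA : ∀ L ≥ 0, 2 ^ β' * L ^ β' ≤ L ^ β / 2 + A) (hx : 1 ≤ x) (hy : 0 ≤ y)
    (hxy : log x ≤ log (exp 1 + y) ^ β / 2) :
    x * y * exp (log (exp 1 + x * y) ^ β') ≤ exp A * (y * exp (log (exp 1 + y) ^ β)) := by
  set L := log (exp 1 + y)
  have hL : 1 ≤ L := one_le_log_exp_one_add hy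
  have hM : log (exp 1 + x * y) ≤ 2 * L := by
    linarith [log_exp_one_add_mul_le hx hy, rpow_le_self_of_one_le hL hβ]
  have hMβ' : log (exp 1 + x * y) ^ β' ≤ L ^ β / 2 + A := by
    calc log (exp 1 + x * y) ^ β' ≤ (2 * L) ^ β' := by
          gcongr
          exact (zero_le_one.trans (one_le_log_exp_one_add (by positivity)))
      _ = 2 ^ β' * L ^ β' := mul_rpow zero_le_two (by positivity)
      _ ≤ L ^ β / 2 + A := hA L (by positivity)
  have hxL : x ≤ exp (L ^ β / 2) := by
    rw [← exp_log (by positivity : 0 < x)]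
    exact exp_le_exp.2 hxy
  have hexp : exp (L ^ β) = exp (L ^ β / 2) * exp (L ^ β / 2) := by
    rw [← exp_add, add_halves]
  calc x * y * exp (log (exp 1 + x * y) ^ β')
      ≤ exp (L ^ β / 2) * y * exp (L ^ β / 2 + A) := by gcongr
    _ = exp A * (y * exp (L ^ β)) := by rw [hexp, exp_add]; ring

theorem mul_mul_exp_le_of_log_gt {α p B : ℝ} (hβ' : β' ≤ 1) (hβ : 0 < β) (hα : 1 ≤ α)
    (hB : ∀ t ≥ 0, 2 * (t + 2 ^ β⁻¹ * t ^ β⁻¹) ≤ p * exp t + B) (hp : 0 ≤ p)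
    (hx : 1 ≤ x) (hy : 0 ≤ y) (hxy : log (exp 1 + y) ^ β / 2 < log x) :
    x * y * exp (log (exp 1 + x * y) ^ β') ≤ exp B * exp (p * x ^ α) := by
  set L := log (exp 1 + y)
  set t := log x
  have ht : 0 ≤ t := log_nonneg hx
  have hL : 1 ≤ L := one_le_log_exp_one_add hy
  have hMβ' : log (exp 1 + x * y) ^ β' ≤ t + L :=
    (rpow_le_self_of_one_le (one_le_log_exp_one_add (by positivity)) hβ').trans
      (log_exp_one_add_mul_le hx hy)
  have hLt : L ≤ 2 ^ β⁻¹ * t ^ β⁻¹ := by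
    rw [← mul_rpow zero_le_two ht]
    exact ((lt_rpow_inv_iff_of_pos (by positivity) (by positivity) hβ).2 (by linarith)).le
  have hyL : y ≤ exp L := by
    rw [exp_log (by positivity)]
    linarith [exp_pos 1]
  have hxt : x = exp t := (exp_log (by positivity)).symm
  calc x * y * exp (log (exp 1 + x * y) ^ β')
      ≤ exp t * exp L * exp (t + L) := by rw [← hxt]; gcongr
    _ = exp (2 * (t + L)) := by rw [← exp_add, ← exp_add]; ring_nf
    _ ≤ exp (p * exp t + B) := by
        gcongr
        linarith [hB t ht]
    _ = exp B * exp (p * x) := by rw [← hxt, exp_add, mul_comm]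
    _ ≤ exp B * exp (p * x ^ α) := by
        gcongr
        exact self_le_rpow_of_one_le hx hα

end

theorem stmt10 (β' β α p : ℝ) (hβ'0 : 0 < β') (hβ'β : β' < β) (hβ : β < 1)
    (hα : 1 ≤ α) (hp : 0 < p) :
    ∃ C : ℝ, 0 < C ∧ ∀ x y : ℝ, 1 ≤ x → 1 ≤ y →
      x * y * Real.exp ((Real.log (Real.exp 1 + x * y)) ^ β') ≤
        C * (Real.exp (p * x ^ α) + y * Real.exp ((Real.log (Real.exp 1 + y)) ^ β)) := by
  have hβ0 : 0 < β := hβ'0.trans hβ'β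
  obtain ⟨A, hA⟩ := exists_const_mul_rpow_le_half_rpow_add hβ'0.le hβ'β
  obtain ⟨B, hB⟩ := exists_two_mul_add_rpow_le_mul_exp_add β⁻¹ (inv_pos.2 hβ0).le hp
  refine ⟨exp A + exp B, by positivity, fun x y hx hy => ?_⟩
  have hE : 0 ≤ exp (p * x ^ α) := (exp_pos _).le
  have hY : 0 ≤ y * exp (log (exp 1 + y) ^ β) := by positivity
  rcases le_or_gt (log x) (log (exp 1 + y) ^ β / 2) with hxy | hxy
  · have := mul_mul_exp_le_of_log_le hβ'0.le hβ.le hA hx (by positivity) hxy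
    nlinarith [exp_pos A, exp_pos B]
  · have := mul_mul_exp_le_of_log_gt (hβ'β.trans hβ).le hβ0 hα hB hp.le hx (by positivity) hxy
    nlinarith [exp_pos A, exp_pos B]
end

section
/- Let β > 0 and δ ∈ (0, 1/5). Then the function x ↦ (1 + δ·log(1 + 1/x))^(−β) is concave on (0, ∞), provided δ < 1/(1+β). -/
/-!
With `u x = 1 + δ log (1 + 1/x) ≥ 1`, we have `u' = -δ / (x² + x)`, and the second derivative of
`u ^ (-β)` is `β δ u ^ (-β - 2) (δ (β + 1) - (2x + 1) u) / (x² + x)²`. The bracket is negative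
because `(2x + 1) u > 1 > δ (β + 1)`.
-/

open Real

lemma concaveOn_of_hasDerivAt2_nonpos {D : Set ℝ} (hD : Convex ℝ D) (hD_open : IsOpen D)
    {f f' f'' : ℝ → ℝ} (hf' : ∀ x ∈ D, HasDerivAt f (f' x) x)
    (hf'' : ∀ x ∈ D, HasDerivAt f' (f'' x) x) (hf''₀ : ∀ x ∈ D, f'' x ≤ 0) :
    ConcaveOn ℝ D f := by
  refine concaveOn_of_hasDerivWithinAt2_nonpos (f' := f') (f'' := f'') hD
    (fun x hx ↦ (hf' x hx).continuousAt.continuousWithinAt) ?_ ?_ ?_ <;>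
  rw [hD_open.interior_eq]
  · exact fun x hx ↦ (hf' x hx).hasDerivWithinAt
  · exact fun x hx ↦ (hf'' x hx).hasDerivWithinAt
  · exact hf''₀

lemma hasDerivAt_log_one_add_inv {x : ℝ} (hx : 0 < x) :
    HasDerivAt (fun x ↦ log (1 + 1 / x)) (-(x ^ 2 + x)⁻¹) x := by
  have hinv : HasDerivAt (fun x : ℝ ↦ 1 + 1 / x) (-(x ^ 2)⁻¹) x := by
    simpa only [one_div] using (hasDerivAt_inv hx.ne').const_add 1
  convert hinv.log (by positivity) using 1
  field_simp

lemma one_le_one_add_mul_log_one_add_inv {δ x : ℝ} (hδ : 0 ≤ δ) (hx : 0 < x) :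
    1 ≤ 1 + δ * log (1 + 1 / x) := by
  have : 0 ≤ log (1 + 1 / x) := log_nonneg (by simp [hx.le])
  nlinarith

section

variable {β δ x : ℝ}

lemma hasDerivAt_one_add_mul_log_one_add_inv (hx : 0 < x) :
    HasDerivAt (fun x ↦ 1 + δ * log (1 + 1 / x)) (-δ / (x ^ 2 + x)) x := by
  refine (((hasDerivAt_log_one_add_inv hx).const_mul δ).const_add 1).congr_deriv ?_
  ring

lemma hasDerivAt_one_add_mul_log_one_add_inv_rpow (hδ : 0 ≤ δ) (hx : 0 < x) (p : ℝ) :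
    HasDerivAt (fun x ↦ (1 + δ * log (1 + 1 / x)) ^ p)
      (-δ * p * (1 + δ * log (1 + 1 / x)) ^ (p - 1) / (x ^ 2 + x)) x := by
  have hu := one_le_one_add_mul_log_one_add_inv hδ hx
  refine ((hasDerivAt_one_add_mul_log_one_add_inv hx).rpow_const (p := p)
    (Or.inl (by positivity))).congr_deriv ?_
  ring

lemma hasDerivAt_deriv_one_add_mul_log_one_add_inv_rpow_neg (β : ℝ) (hδ : 0 ≤ δ) (hx : 0 < x) :
    HasDerivAt (fun x ↦ β * δ * (1 + δ * log (1 + 1 / x)) ^ (-β - 1) / (x ^ 2 + x))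
      (β * δ * (1 + δ * log (1 + 1 / x)) ^ (-β - 2) *
        (δ * (β + 1) - (2 * x + 1) * (1 + δ * log (1 + 1 / x))) / (x ^ 2 + x) ^ 2) x := by
  have hu := one_le_one_add_mul_log_one_add_inv hδ hx
  have hpoly : HasDerivAt (fun x : ℝ ↦ x ^ 2 + x) (2 * x + 1) x := by
    simpa using (hasDerivAt_pow 2 x).fun_add (hasDerivAt_id' x)
  refine (((hasDerivAt_one_add_mul_log_one_add_inv_rpow hδ hx (-β - 1)).const_mul
    (β * δ)).fun_div hpoly (by positivity)).congr_deriv ?_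
  set u := 1 + δ * log (1 + 1 / x)
  have hpow : u ^ (-β - 1) = u ^ (-β - 2) * u := by
    rw [← rpow_add_one (by positivity)]
    ring_nf
  rw [show -β - 1 - 1 = -β - 2 by ring, hpow]
  field_simp
  ring

lemma deriv2_one_add_mul_log_one_add_inv_rpow_neg_nonpos (hβ : 0 ≤ β) (hδ : 0 ≤ δ)
    (hδβ : δ * (β + 1) ≤ 1) (hx : 0 < x) :
    β * δ * (1 + δ * log (1 + 1 / x)) ^ (-β - 2) *
      (δ * (β + 1) - (2 * x + 1) * (1 + δ * log (1 + 1 / x))) / (x ^ 2 + x) ^ 2 ≤ 0 := by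
  have hu := one_le_one_add_mul_log_one_add_inv hδ hx
  refine div_nonpos_of_nonpos_of_nonneg (mul_nonpos_of_nonneg_of_nonpos ?_ ?_) (by positivity)
  · have : 0 < 1 + δ * log (1 + 1 / x) := by linarith
    positivity
  · nlinarith

end

theorem stmt11_general (β δ : ℝ) (hβ : 0 < β) (hδ0 : 0 < δ)
    (hδβ : δ < 1 / (1 + β)) :
    ConcaveOn ℝ (Set.Ioi (0:ℝ))
      (fun x => (1 + δ * Real.log (1 + 1/x)) ^ (-β)) := by
  have hδβ' : δ * (β + 1) ≤ 1 := by
    rw [lt_div_iff₀ (by positivity)] at hδβ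
    linarith
  refine concaveOn_of_hasDerivAt2_nonpos (convex_Ioi 0) isOpen_Ioi (fun x hx ↦ ?_)
    (fun x hx ↦ hasDerivAt_deriv_one_add_mul_log_one_add_inv_rpow_neg β hδ0.le hx)
    (fun x hx ↦ deriv2_one_add_mul_log_one_add_inv_rpow_neg_nonpos hβ.le hδ0.le hδβ' hx)
  exact (hasDerivAt_one_add_mul_log_one_add_inv_rpow hδ0.le hx (-β)).congr_deriv (by ring)

theorem stmt11 (β δ : ℝ) (hβ : 0 < β) (hδ0 : 0 < δ) (hδ5 : δ < 1/5)
    (hδβ : δ < 1 / (1 + β)) :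
    ConcaveOn ℝ (Set.Ioi (0:ℝ))
      (fun x => (1 + δ * Real.log (1 + 1/x)) ^ (-β)) :=
  stmt11_general β δ hβ hδ0 hδβ
end

section
/- Let p > 0 and let φ : [0,1] → [0,1] be an increasing absolutely continuous homeomorphism with φ(0) = 0, φ(1) = 1, φ' > 0 a.e., and suppose C₀ := ∫_0^1 ( exp(p·r·φ'(r)/φ(r)) + exp(p·φ(r)/(r·φ'(r))) )·r dr < ∞. Then for every natural number n ≥ 1, log( φ(e^(1−n)) / φ(e^(−n)) ) ≥ p / (log C₀ + 2n). -/
/-!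
On `(a, b) = (e^(-n), e^(1-n))` the measure `dr / r` is a probability measure, and the radial
distortion `K = r φ' / φ` satisfies `K dr / r = d(log φ)`, so its mean is `L = log (φ b / φ a)`.
Jensen's inequality for the convex function `x ↦ exp (p / x)` gives
`exp (p / L) ≤ ∫ exp (p / K) dr / r`, and since `r⁻¹ ≤ e^(2n) r` on `(a, b)` the right-hand side
is at most `e^(2n) C₀`. Taking logarithms gives `p / L ≤ log C₀ + 2n`.
-/

open Real MeasureTheory Set

lemma exp_div_tangent_le {p L x : ℝ} (hp : 0 ≤ p) (hL : 0 < L) (hx : 0 < x) :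
    exp (p / L) - p / L ^ 2 * exp (p / L) * (x - L) ≤ exp (p / x) := by
  have hslope : p / L ^ 2 * (L - x) ≤ p / x - p / L := by
    have h : p / x - p / L - p / L ^ 2 * (L - x) = p * (L - x) ^ 2 / (x * L ^ 2) := by
      field_simp
    have : 0 ≤ p * (L - x) ^ 2 / (x * L ^ 2) := by positivity
    linarith
  calc exp (p / L) - p / L ^ 2 * exp (p / L) * (x - L)
      = exp (p / L) * (1 + p / L ^ 2 * (L - x)) := by ring
    _ ≤ exp (p / L) * exp (p / x - p / L) := by
        gcongr
        linarith [add_one_le_exp (p / x - p / L)]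
    _ = exp (p / x) := by rw [← exp_add, add_sub_cancel]

theorem exp_div_integral_le_integral_exp_div {α : Type*} [MeasurableSpace α] {μ : Measure α}
    [IsProbabilityMeasure μ] {p : ℝ} (hp : 0 ≤ p) {f : α → ℝ} (hf : ∀ᵐ x ∂μ, 0 < f x)
    (hfi : Integrable f μ) (hgi : Integrable (fun x => exp (p / f x)) μ) :
    exp (p / ∫ x, f x ∂μ) ≤ ∫ x, exp (p / f x) ∂μ := by
  set L := ∫ x, f x ∂μ
  have hL : 0 < L := by
    rw [integral_pos_iff_support_of_nonneg_ae (hf.mono fun x hx => hx.le) hfi]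
    refine pos_iff_ne_zero.2 fun h0 => ?_
    have hzero : ∀ᵐ x ∂μ, f x = 0 := by
      rwa [ae_iff, ← Function.support]
    obtain ⟨x, hpos, hx⟩ := (hf.and hzero).exists
    exact hpos.ne' hx
  have hdev : Integrable (fun x => f x - L) μ := hfi.sub (integrable_const L)
  have htangent : Integrable (fun x => exp (p / L) - p / L ^ 2 * exp (p / L) * (f x - L)) μ :=
    (integrable_const _).sub (hdev.const_mul _)
  calc exp (p / L) = ∫ x, (exp (p / L) - p / L ^ 2 * exp (p / L) * (f x - L)) ∂μ := by
        rw [integral_sub (integrable_const _) (hdev.const_mul _), integral_const_mul,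
          integral_sub hfi (integrable_const L)]
        simp [L]
    _ ≤ ∫ x, exp (p / f x) ∂μ :=
        integral_mono_ae htangent hgi (hf.mono fun x hx => exp_div_tangent_le hp hL hx)

noncomputable def invMeasure (a b : ℝ) : Measure ℝ :=
  (volume.restrict (Ioo a b)).withDensity fun r => ENNReal.ofReal r⁻¹

section invMeasure

variable {a b : ℝ}

lemma integrable_invMeasure_iff (ha : 0 ≤ a) {g : ℝ → ℝ} :
    Integrable g (invMeasure a b) ↔ IntegrableOn (fun r => r⁻¹ * g r) (Ioo a b) := by
  rw [invMeasure, integrable_withDensity_iff (by fun_prop) (by simp)]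
  refine integrable_congr ((ae_restrict_mem measurableSet_Ioo).mono fun r hr => ?_)
  simp [ENNReal.toReal_ofReal (inv_nonneg.2 (ha.trans hr.1.le)), mul_comm]

lemma integral_invMeasure (ha : 0 ≤ a) (g : ℝ → ℝ) :
    ∫ r, g r ∂invMeasure a b = ∫ r in Ioo a b, r⁻¹ * g r := by
  rw [invMeasure, integral_withDensity_eq_integral_toReal_smul (by fun_prop) (by simp)]
  refine setIntegral_congr_fun measurableSet_Ioo fun r hr => ?_
  simp [ENNReal.toReal_ofReal (inv_nonneg.2 (ha.trans hr.1.le))]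

lemma isProbabilityMeasure_invMeasure (ha : 0 < a) (hb : 0 < b) (hab : log b - log a = 1) :
    IsProbabilityMeasure (invMeasure a b) := by
  have hle : a ≤ b := (log_le_log_iff ha hb).1 (by linarith)
  have hinv : IntegrableOn (fun r : ℝ => r⁻¹) (Ioo a b) :=
    (continuousOn_inv₀.mono fun r hr => (ha.trans_le hr.1).ne').integrableOn_Icc.mono_set
      Ioo_subset_Icc_self
  constructor
  rw [invMeasure, withDensity_apply _ MeasurableSet.univ, Measure.restrict_univ,
    ← ofReal_integral_eq_lintegral_ofReal hinv, ← integral_Ioc_eq_integral_Ioo,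
    ← intervalIntegral.integral_of_le hle, integral_inv_of_pos ha hb, log_div hb.ne' ha.ne', hab,
    ENNReal.ofReal_one]
  exact (ae_restrict_mem measurableSet_Ioo).mono fun r hr => inv_nonneg.2 (ha.trans hr.1).le

end invMeasure

section logDeriv

variable {a b : ℝ} {φ d : ℝ → ℝ}

lemma HasDerivAt.nonneg_of_monotoneOn_Icc {x : ℝ} (hφ : MonotoneOn φ (Icc a b))
    (hx : x ∈ Ioo a b) (hd : HasDerivAt φ (d x) x) : 0 ≤ d x := by
  refine hd.hasDerivWithinAt.nonneg_of_monotoneOn ?_ hφ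
  rw [accPt_principal_iff_nhdsWithin]
  have : (nhdsWithin x (Ioo a x)).NeBot := by
    rw [nhdsWithin_Ioo_eq_nhdsLT hx.1]
    infer_instance
  exact this.mono (nhdsWithin_mono _ fun y hy => ⟨⟨hy.1.le, hy.2.le.trans hx.2.le⟩, hy.2.ne⟩)

lemma integrableOn_div_of_hasDerivAt (hcont : ContinuousOn φ (Icc a b))
    (hpos : ∀ r ∈ Icc a b, 0 < φ r) (hderiv : ∀ r ∈ Ioo a b, HasDerivAt φ (d r) r)
    (hd : ∀ r ∈ Ioo a b, 0 ≤ d r) : IntegrableOn (fun r => d r / φ r) (Ioo a b) :=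
  (intervalIntegral.integrableOn_deriv_of_nonneg (hcont.log fun r hr => (hpos r hr).ne')
    (fun r hr => (hderiv r hr).log (hpos r (Ioo_subset_Icc_self hr)).ne')
    fun r hr => div_nonneg (hd r hr) (hpos r (Ioo_subset_Icc_self hr)).le).mono_set
    Ioo_subset_Ioc_self

lemma setIntegral_div_of_hasDerivAt (hab : a ≤ b) (hcont : ContinuousOn φ (Icc a b))
    (hpos : ∀ r ∈ Icc a b, 0 < φ r) (hderiv : ∀ r ∈ Ioo a b, HasDerivAt φ (d r) r)
    (hd : ∀ r ∈ Ioo a b, 0 ≤ d r) :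
    ∫ r in Ioo a b, d r / φ r = log (φ b) - log (φ a) := by
  rw [← integral_Ioc_eq_integral_Ioo, ← intervalIntegral.integral_of_le hab]
  exact intervalIntegral.integral_eq_sub_of_hasDerivAt_of_le hab
    (hcont.log fun r hr => (hpos r hr).ne')
    (fun r hr => (hderiv r hr).log (hpos r (Ioo_subset_Icc_self hr)).ne')
    ((intervalIntegrable_iff_integrableOn_Ioo_of_le hab).2
      (integrableOn_div_of_hasDerivAt hcont hpos hderiv hd))

lemma aemeasurable_of_hasDerivAt {s : Set ℝ} (hs : MeasurableSet s)
    (hderiv : ∀ r ∈ s, HasDerivAt φ (d r) r) : AEMeasurable d (volume.restrict s) :=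
  (measurable_deriv φ).aemeasurable.congr <|
    (ae_restrict_mem hs).mono fun r hr => (hderiv r hr).deriv

end logDeriv

noncomputable def distortionIntegrand (p : ℝ) (φ d : ℝ → ℝ) (r : ℝ) : ℝ :=
  (exp (p * r * d r / φ r) + exp (p * φ r / (r * d r))) * r

noncomputable def radialDistortion (φ d : ℝ → ℝ) (r : ℝ) : ℝ := r * d r / φ r

section distortion

variable {a b p : ℝ} {φ d : ℝ → ℝ}

lemma inv_mul_exp_div_radialDistortion_le {r : ℝ} (ha : 0 < a) (hr : a ≤ r) :
    r⁻¹ * exp (p / radialDistortion φ d r) ≤ (a ^ 2)⁻¹ * distortionIntegrand p φ d r := by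
  have hr0 : 0 < r := ha.trans_le hr
  have hinv : r⁻¹ ≤ (a ^ 2)⁻¹ * r := by
    rw [inv_mul_eq_div, inv_le_iff_one_le_mul₀ hr0, div_mul_eq_mul_div,
      one_le_div (by positivity)]
    nlinarith
  rw [radialDistortion, div_div_eq_mul_div, distortionIntegrand]
  calc r⁻¹ * exp (p * φ r / (r * d r)) ≤ (a ^ 2)⁻¹ * r * exp (p * φ r / (r * d r)) := by gcongr
    _ ≤ (a ^ 2)⁻¹ * ((exp (p * r * d r / φ r) + exp (p * φ r / (r * d r))) * r) := by
      nlinarith [mul_nonneg (mul_nonneg (inv_nonneg.2 (sq_nonneg a)) hr0.le)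
        (exp_pos (p * r * d r / φ r)).le]

lemma integral_radialDistortion_invMeasure (ha : 0 < a) (hab : a ≤ b)
    (hcont : ContinuousOn φ (Icc a b)) (hpos : ∀ r ∈ Icc a b, 0 < φ r)
    (hderiv : ∀ r ∈ Ioo a b, HasDerivAt φ (d r) r) (hd : ∀ r ∈ Ioo a b, 0 ≤ d r) :
    Integrable (radialDistortion φ d) (invMeasure a b) ∧
      ∫ r, radialDistortion φ d r ∂invMeasure a b = log (φ b) - log (φ a) := by
  have hK : EqOn (fun r => r⁻¹ * radialDistortion φ d r) (fun r => d r / φ r) (Ioo a b) :=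
    fun r hr => by
      simp only [radialDistortion]
      field_simp [(ha.trans hr.1).ne']
  rw [integrable_invMeasure_iff ha.le, integral_invMeasure ha.le,
    integrableOn_congr_fun hK measurableSet_Ioo, setIntegral_congr_fun measurableSet_Ioo hK]
  exact ⟨integrableOn_div_of_hasDerivAt hcont hpos hderiv hd,
    setIntegral_div_of_hasDerivAt hab hcont hpos hderiv hd⟩

lemma integral_exp_div_radialDistortion_invMeasure_le (ha : 0 < a)
    (hderiv : ∀ r ∈ Ioo a b, HasDerivAt φ (d r) r)
    (hint : IntegrableOn (distortionIntegrand p φ d) (Ioo a b)) :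
    Integrable (fun r => exp (p / radialDistortion φ d r)) (invMeasure a b) ∧
      ∫ r, exp (p / radialDistortion φ d r) ∂invMeasure a b ≤
        (a ^ 2)⁻¹ * ∫ r in Ioo a b, distortionIntegrand p φ d r := by
  have hφ : AEMeasurable φ (volume.restrict (Ioo a b)) :=
    ContinuousOn.aemeasurable (fun r hr => (hderiv r hr).continuousAt.continuousWithinAt)
      measurableSet_Ioo
  have hd := aemeasurable_of_hasDerivAt measurableSet_Ioo hderiv
  have hbound : ∀ᵐ r ∂volume.restrict (Ioo a b),
      r⁻¹ * exp (p / radialDistortion φ d r) ≤ (a ^ 2)⁻¹ * distortionIntegrand p φ d r :=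
    (ae_restrict_mem measurableSet_Ioo).mono fun r hr =>
      inv_mul_exp_div_radialDistortion_le ha hr.1.le
  have hi : IntegrableOn (fun r => r⁻¹ * exp (p / radialDistortion φ d r)) (Ioo a b) := by
    refine Integrable.mono' (hint.const_mul (a ^ 2)⁻¹) ?_ ?_
    · exact (aemeasurable_id.inv.mul (measurable_exp.comp_aemeasurable
        (aemeasurable_const.div ((aemeasurable_id.mul hd).div hφ)))).aestronglyMeasurable
    · filter_upwards [hbound, ae_restrict_mem measurableSet_Ioo] with r hr hr'
      rwa [norm_of_nonneg (mul_nonneg (inv_nonneg.2 (ha.trans hr'.1).le) (exp_pos _).le)]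
  rw [integrable_invMeasure_iff ha.le, integral_invMeasure ha.le, ← integral_const_mul]
  exact ⟨hi, integral_mono_ae hi (hint.const_mul _) hbound⟩

lemma exp_div_log_sub_log_le (hp : 0 ≤ p) (ha : 0 < a) (hb : 0 < b)
    (hab : log b - log a = 1) (hmono : MonotoneOn φ (Icc a b)) (hcont : ContinuousOn φ (Icc a b))
    (hpos : ∀ r ∈ Icc a b, 0 < φ r) (hderiv : ∀ r ∈ Ioo a b, HasDerivAt φ (d r) r)
    (hdpos : ∀ᵐ r ∂volume.restrict (Ioo a b), 0 < d r)
    (hint : IntegrableOn (distortionIntegrand p φ d) (Ioo a b)) :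
    exp (p / (log (φ b) - log (φ a))) ≤ (a ^ 2)⁻¹ * ∫ r in Ioo a b, distortionIntegrand p φ d r := by
  have := isProbabilityMeasure_invMeasure ha hb hab
  obtain ⟨hKi, hK⟩ := integral_radialDistortion_invMeasure ha
    ((log_le_log_iff ha hb).1 (by linarith)) hcont hpos hderiv
    fun r hr => (hderiv r hr).nonneg_of_monotoneOn_Icc hmono hr
  obtain ⟨hEi, hE⟩ := integral_exp_div_radialDistortion_invMeasure_le ha hderiv hint
  have hKpos : ∀ᵐ r ∂invMeasure a b, 0 < radialDistortion φ d r := by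
    refine (withDensity_absolutelyContinuous _ _).ae_le ?_
    filter_upwards [hdpos, ae_restrict_mem measurableSet_Ioo] with r hd hr
    exact div_pos (mul_pos (ha.trans hr.1) hd) (hpos r (Ioo_subset_Icc_self hr))
  exact hK ▸ (exp_div_integral_le_integral_exp_div hp hKpos hKi hEi).trans hE

end distortion

lemma div_le_of_exp_div_le_exp_mul {p L m C : ℝ} (hp : 0 < p) (hL : 0 < L)
    (h : exp (p / L) ≤ exp m * C) : p / (log C + m) ≤ L := by
  have hC : 0 < C := pos_of_mul_pos_right ((exp_pos _).trans_le h) (exp_pos m).le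
  have hlog : p / L ≤ log C + m := by
    simpa [log_mul (exp_ne_zero m) hC.ne', add_comm] using log_le_log (exp_pos _) h
  rw [div_le_iff₀ ((div_pos hp hL).trans_le hlog)]
  rwa [div_le_iff₀ hL, mul_comm] at hlog

theorem stmt14_general (p C₀ : ℝ) (hp : 0 < p) (φ d : ℝ → ℝ)
    (hmono : StrictMonoOn φ (Set.Icc 0 1)) (hcont : ContinuousOn φ (Set.Icc 0 1))
    (hφ0 : φ 0 = 0)
    (hderiv : ∀ r ∈ Set.Ioo (0:ℝ) 1, HasDerivAt φ (d r) r)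
    (hdpos : ∀ᵐ r ∂(volume.restrict (Set.Ioo (0:ℝ) 1)), 0 < d r)
    (hint : IntegrableOn
      (fun r => (Real.exp (p * r * d r / φ r) + Real.exp (p * φ r / (r * d r))) * r)
      (Set.Ioo 0 1))
    (hC₀ : ∫ r in Set.Ioo (0:ℝ) 1,
      (Real.exp (p * r * d r / φ r) + Real.exp (p * φ r / (r * d r))) * r = C₀) :
    ∀ n : ℕ, 1 ≤ n →
      p / (Real.log C₀ + 2 * n) ≤
        Real.log (φ (Real.exp (1 - n)) / φ (Real.exp (-(n:ℝ)))) := by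
  intro n hn
  set a := exp (-(n : ℝ))
  set b := exp (1 - n)
  have ha : 0 < a := exp_pos _
  have hab : a < b := exp_lt_exp.2 (by linarith)
  have hb : b ≤ 1 := exp_le_one_iff.2 (by linarith [(Nat.one_le_cast (α := ℝ)).2 hn])
  have hIcc : Icc a b ⊆ Icc 0 1 := Icc_subset_Icc ha.le hb
  have hIoo : Ioo a b ⊆ Ioo 0 1 := Ioo_subset_Ioo ha.le hb
  have hpos : ∀ r ∈ Icc a b, 0 < φ r := fun r hr =>
    hφ0 ▸ hmono ⟨le_rfl, zero_le_one⟩ (hIcc hr) (ha.trans_le hr.1)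
  have hL : 0 < log (φ b) - log (φ a) := sub_pos.2 <|
    log_lt_log (hpos a (left_mem_Icc.2 hab.le))
      (hmono (hIcc (left_mem_Icc.2 hab.le)) (hIcc (right_mem_Icc.2 hab.le)) hab)
  have hJensen := exp_div_log_sub_log_le hp.le ha (ha.trans hab)
    (by simp only [a, b, log_exp]; ring) (hmono.monotoneOn.mono hIcc) (hcont.mono hIcc) hpos
    (fun r hr => hderiv r (hIoo hr)) (ae_restrict_of_ae_restrict_of_subset hIoo hdpos)
    (hint.mono_set hIoo)
  have hC : ∫ r in Ioo a b, distortionIntegrand p φ d r ≤ C₀ := by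
    refine hC₀ ▸ setIntegral_mono_set hint ?_ hIoo.eventuallyLE
    filter_upwards [ae_restrict_mem measurableSet_Ioo] with r hr
    exact mul_nonneg (by positivity) hr.1.le
  have ha2 : (a ^ 2)⁻¹ = exp (2 * n) := by
    rw [← exp_nat_mul, ← exp_neg]
    ring_nf
  rw [log_div (hpos b (right_mem_Icc.2 hab.le)).ne' (hpos a (left_mem_Icc.2 hab.le)).ne']
  refine div_le_of_exp_div_le_exp_mul hp hL (hJensen.trans ?_)
  rw [ha2]
  gcongr

theorem stmt14 (p C₀ : ℝ) (hp : 0 < p) (φ d : ℝ → ℝ)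
    (hmono : StrictMonoOn φ (Set.Icc 0 1)) (hcont : ContinuousOn φ (Set.Icc 0 1))
    (hφ0 : φ 0 = 0) (hφ1 : φ 1 = 1)
    (hderiv : ∀ r ∈ Set.Ioo (0:ℝ) 1, HasDerivAt φ (d r) r)
    (hdpos : ∀ᵐ r ∂(volume.restrict (Set.Ioo (0:ℝ) 1)), 0 < d r)
    (hAC : ∀ a ∈ Set.Icc (0:ℝ) 1, ∀ b ∈ Set.Icc (0:ℝ) 1, a ≤ b →
      φ b - φ a = ∫ r in a..b, d r)
    (hint : IntegrableOn
      (fun r => (Real.exp (p * r * d r / φ r) + Real.exp (p * φ r / (r * d r))) * r)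
      (Set.Ioo 0 1))
    (hC₀ : ∫ r in Set.Ioo (0:ℝ) 1,
      (Real.exp (p * r * d r / φ r) + Real.exp (p * φ r / (r * d r))) * r = C₀) :
    ∀ n : ℕ, 1 ≤ n →
      p / (Real.log C₀ + 2 * n) ≤
        Real.log (φ (Real.exp (1 - n)) / φ (Real.exp (-(n:ℝ)))) :=
  stmt14_general p C₀ hp φ d hmono hcont hφ0 hderiv hdpos hint hC₀
end

section
/- Let p > 0, C₀ < ∞, and φ as above (increasing absolutely continuous homeomorphism of [0,1] with the exponential distortion integrability with constant C₀). Then there exists a constant C = C(p, C₀) such that φ(e^(−n)) ≤ C·n^(−p/2) for all natural numbers n ≥ 1. -/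
/-!
Write `v = p φ / (r φ')`, so that `(log φ)' = p / (r v)`. On the annulus `[e^(-k), e^(1-k)]`, of
logarithmic length one, the tangent line of `1 / v` at `c = log C₀ + 2k` together with
`v ≤ c - 1 + e^(v - c)` gives `(log φ)' ≥ (p / c²) ((c + 1) / r - e^(-c) e^v / r)`, and
`e^v / r ≤ e^(2k) e^v r` is integrated against the hypothesis. Hence
`log φ(e^(1-k)) - log φ(e^(-k)) ≥ p / (log C₀ + 2k)`; summing over `k ≤ n` and comparing the sum
with `(1/2) log n` gives the decay `φ(e^(-n)) ≤ C n^(-p/2)`.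
-/

open Real MeasureTheory Set

lemma add_one_sub_exp_sub_div_sq_le_inv {v c : ℝ} (hv : 0 < v) (hc : 0 < c) :
    (c + 1 - exp (v - c)) / c ^ 2 ≤ v⁻¹ := by
  have htangent : 2 * c - v ≤ c ^ 2 / v := by
    rw [le_div_iff₀ hv]; nlinarith [sq_nonneg (c - v)]
  have hexp : v - c + 1 ≤ exp (v - c) := add_one_le_exp _
  rw [div_le_iff₀ (by positivity), inv_mul_eq_div]
  linarith

lemma log_add_mul_sub_log_le_sum {x h : ℝ} (hx : 0 < x) (hh : 0 ≤ h) (n : ℕ) :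
    log (x + n * h) - log x ≤ ∑ j ∈ Finset.range n, h / (x + j * h) := by
  induction n with
  | zero => simp
  | succ n ih =>
    rw [Finset.sum_range_succ]
    have hxn : 0 < x + n * h := by positivity
    have hstep : log (x + (n + 1 : ℕ) * h) - log (x + n * h) ≤ h / (x + n * h) := by
      rw [← log_div (by positivity) hxn.ne']
      calc _ ≤ (x + (n + 1 : ℕ) * h) / (x + n * h) - 1 := log_le_sub_one_of_pos (by positivity)
        _ = _ := by field_simp; push_cast; ring
    linarith

lemma le_rpow_neg_of_le_log_sub_log {u : ℕ → ℝ} {p L : ℝ} (hp : 0 ≤ p) (hL : 0 < L + 2)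
    (hu : ∀ n, 0 < u n) (hu0 : u 0 ≤ 1)
    (hstep : ∀ j : ℕ, p / (L + 2 * ((j : ℝ) + 1)) ≤ log (u j) - log (u (j + 1)))
    {n : ℕ} (hn : 1 ≤ n) : u n ≤ ((L + 2) / 2) ^ (p / 2) * (n : ℝ) ^ (-(p / 2)) := by
  have hn0 : (0 : ℝ) < n := by exact_mod_cast hn
  have hsum : p / 2 * (log (L + 2 + n * 2) - log (L + 2)) ≤ -log (u n) := by
    calc p / 2 * (log (L + 2 + n * 2) - log (L + 2))
        ≤ p / 2 * ∑ j ∈ Finset.range n, 2 / (L + 2 + j * 2) := by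
          gcongr; exact log_add_mul_sub_log_le_sum hL zero_le_two n
      _ = ∑ j ∈ Finset.range n, p / (L + 2 * ((j : ℝ) + 1)) := by
          rw [Finset.mul_sum]
          refine Finset.sum_congr rfl fun j _ => ?_
          rw [show L + 2 * ((j : ℝ) + 1) = L + 2 + j * 2 by ring]
          ring
      _ ≤ ∑ j ∈ Finset.range n, (log (u j) - log (u (j + 1))) :=
          Finset.sum_le_sum fun j _ => hstep j
      _ = log (u 0) - log (u n) := Finset.sum_range_sub' _ n
      _ ≤ -log (u n) := by linarith [log_nonpos (hu 0).le hu0]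
  have hlog : log (2 * n) ≤ log (L + 2 + n * 2) := log_le_log (by positivity) (by linarith)
  calc u n = exp (log (u n)) := (exp_log (hu n)).symm
    _ ≤ exp (p / 2 * (log (L + 2) - log (2 * n))) := by
        gcongr; nlinarith
    _ = ((L + 2) / 2) ^ (p / 2) * (n : ℝ) ^ (-(p / 2)) := by
        rw [rpow_def_of_pos (by positivity), rpow_def_of_pos hn0, ← exp_add,
          log_div hL.ne' two_ne_zero, log_mul two_ne_zero hn0.ne']
        ring_nf

section DistortionIntegrand

variable {p a c r : ℝ} {φ d : ℝ → ℝ}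

lemma exp_mul_le_distortionIntegrand_left (hr : 0 ≤ r) :
    exp (p * r * d r / φ r) * r ≤ distortionIntegrand p φ d r := by
  unfold distortionIntegrand; nlinarith [exp_pos (p * φ r / (r * d r))]

lemma exp_mul_le_distortionIntegrand_right (hr : 0 ≤ r) :
    exp (p * φ r / (r * d r)) * r ≤ distortionIntegrand p φ d r := by
  unfold distortionIntegrand; nlinarith [exp_pos (p * r * d r / φ r)]

lemma distortionIntegrand_nonneg (hr : 0 ≤ r) : 0 ≤ distortionIntegrand p φ d r :=
  (mul_nonneg (exp_pos _).le hr).trans (exp_mul_le_distortionIntegrand_left hr)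

lemma two_mul_le_distortionIntegrand (hp : 0 ≤ p) (hr : 0 ≤ r) (hφ : 0 ≤ φ r) (hd : 0 ≤ d r) :
    2 * r ≤ distortionIntegrand p φ d r := by
  have h₁ : 1 ≤ exp (p * r * d r / φ r) := one_le_exp (by positivity)
  have h₂ : 1 ≤ exp (p * φ r / (r * d r)) := one_le_exp (by positivity)
  unfold distortionIntegrand; nlinarith

lemma mul_sq_mul_div_le_distortionIntegrand (hp : 0 ≤ p) (ha : 0 ≤ a) (har : a ≤ r)
    (hφ : 0 ≤ φ r) (hd : 0 ≤ d r) :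
    p * a ^ 2 * (d r / φ r) ≤ distortionIntegrand p φ d r := by
  have hr : 0 ≤ r := ha.trans har
  calc p * a ^ 2 * (d r / φ r) ≤ p * r ^ 2 * (d r / φ r) := by gcongr
    _ = p * r * d r / φ r * r := by ring
    _ ≤ exp (p * r * d r / φ r) * r := by gcongr; linarith [add_one_le_exp (p * r * d r / φ r)]
    _ ≤ distortionIntegrand p φ d r := exp_mul_le_distortionIntegrand_left hr

lemma le_div_of_distortionIntegrand (hp : 0 < p) (hc : 0 < c) (ha : 0 < a)
    (har : a ≤ r) (hφ : 0 < φ r) (hd : 0 < d r) :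
    p / c ^ 2 * ((c + 1) / r - exp (-c) / a ^ 2 * distortionIntegrand p φ d r) ≤ d r / φ r := by
  have hr : 0 < r := ha.trans_le har
  set v := p * φ r / (r * d r)
  have hv : 0 < v := by positivity
  have hexp : exp (v - c) / r ≤ exp (-c) / a ^ 2 * distortionIntegrand p φ d r := by
    calc exp (v - c) / r = exp (-c) / r ^ 2 * (exp v * r) := by
          rw [sub_eq_add_neg, exp_add]; field_simp
      _ ≤ exp (-c) / a ^ 2 * (exp v * r) := by gcongr
      _ ≤ exp (-c) / a ^ 2 * distortionIntegrand p φ d r := by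
          gcongr; exact exp_mul_le_distortionIntegrand_right hr.le
  calc p / c ^ 2 * ((c + 1) / r - exp (-c) / a ^ 2 * distortionIntegrand p φ d r)
      ≤ p / c ^ 2 * ((c + 1) / r - exp (v - c) / r) := by gcongr
    _ = p / r * ((c + 1 - exp (v - c)) / c ^ 2) := by ring
    _ ≤ p / r * v⁻¹ := by gcongr; exact add_one_sub_exp_sub_div_sq_le_inv hv hc
    _ = d r / φ r := by simp only [v]; field_simp

end DistortionIntegrand

section Annulus

variable {p a b c : ℝ} {φ d : ℝ → ℝ}

lemma integrableOn_div_of_distortionIntegrand (hp : 0 < p) (ha : 0 < a)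
    (hφ : ∀ r ∈ Ioo a b, 0 < φ r)
    (hmeas : AEStronglyMeasurable (fun r => d r / φ r) (volume.restrict (Ioo a b)))
    (hd : ∀ᵐ r ∂volume.restrict (Ioo a b), 0 < d r)
    (hint : IntegrableOn (distortionIntegrand p φ d) (Ioo a b)) :
    IntegrableOn (fun r => d r / φ r) (Ioo a b) := by
  refine (hint.const_mul (p * a ^ 2)⁻¹).mono hmeas ?_
  filter_upwards [hd, ae_restrict_mem measurableSet_Ioo] with r hdr hr
  have hφr := hφ r hr
  rw [norm_of_nonneg (by positivity), norm_of_nonneg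
    (mul_nonneg (by positivity) (distortionIntegrand_nonneg (ha.trans hr.1).le)),
    le_inv_mul_iff₀ (by positivity)]
  exact mul_sq_mul_div_le_distortionIntegrand hp.le ha.le hr.1.le hφr.le hdr.le

lemma integral_inv_Ioo_exp_one_mul (ha : 0 < a) : ∫ r in Ioo a (exp 1 * a), r⁻¹ = 1 := by
  rw [← integral_Ioc_eq_integral_Ioo, ← intervalIntegral.integral_of_le (by
      nlinarith [add_one_le_exp 1]), integral_inv_of_pos ha (by positivity),
    mul_div_cancel_right₀ _ ha.ne', log_exp]

theorem div_le_log_sub_log_of_distortionIntegrand (hp : 0 < p) (hc : 0 < c) (ha : 0 < a)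
    (hb : b = exp 1 * a) (hφ : ∀ r ∈ Icc a b, 0 < φ r) (hcont : ContinuousOn φ (Icc a b))
    (hderiv : ∀ r ∈ Ioo a b, HasDerivAt φ (d r) r)
    (hd : ∀ᵐ r ∂volume.restrict (Ioo a b), 0 < d r)
    (hint : IntegrableOn (distortionIntegrand p φ d) (Ioo a b))
    (hC : ∫ r in Ioo a b, distortionIntegrand p φ d r ≤ a ^ 2 * exp c) :
    p / c ≤ log (φ b) - log (φ a) := by
  have hab : a ≤ b := by rw [hb]; nlinarith [add_one_le_exp 1]
  have hdmeas : AEMeasurable d (volume.restrict (Ioo a b)) :=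
    (measurable_deriv φ).aemeasurable.congr <|
      (ae_restrict_mem measurableSet_Ioo).mono fun r hr => (hderiv r hr).deriv
  have hφmeas : AEMeasurable φ (volume.restrict (Ioo a b)) :=
    (hcont.mono Ioo_subset_Icc_self).aemeasurable measurableSet_Ioo
  have hlogderiv : IntegrableOn (fun r => d r / φ r) (Ioo a b) :=
    integrableOn_div_of_distortionIntegrand hp ha (fun r hr => hφ r (Ioo_subset_Icc_self hr))
      (hdmeas.div hφmeas).aestronglyMeasurable hd hint
  have hinv : IntegrableOn (fun r : ℝ => r⁻¹) (Ioo a b) :=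
    ((continuousOn_inv₀.mono fun r hr => (ha.trans_le hr.1).ne').integrableOn_Icc).mono_set
      Ioo_subset_Icc_self
  have hftc : ∫ r in Ioo a b, d r / φ r = log (φ b) - log (φ a) := by
    rw [← integral_Ioc_eq_integral_Ioo, ← intervalIntegral.integral_of_le hab]
    refine intervalIntegral.integral_eq_sub_of_hasDerivAt_of_le hab
      (hcont.log fun r hr => (hφ r hr).ne') (fun r hr => ?_)
      ((intervalIntegrable_iff_integrableOn_Ioo_of_le hab).mpr hlogderiv)
    exact (hderiv r hr).log (hφ r (Ioo_subset_Icc_self hr)).ne'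
  calc p / c = p / c ^ 2 * ((c + 1) * 1 - exp (-c) / a ^ 2 * (a ^ 2 * exp c)) := by
        rw [exp_neg]; field_simp; ring
    _ ≤ p / c ^ 2 * ((c + 1) * ∫ r in Ioo a b, r⁻¹) -
        p / c ^ 2 * (exp (-c) / a ^ 2 * ∫ r in Ioo a b, distortionIntegrand p φ d r) := by
        rw [hb, integral_inv_Ioo_exp_one_mul ha, ← hb, ← mul_sub]; gcongr
    _ = ∫ r in Ioo a b,
          p / c ^ 2 * ((c + 1) / r - exp (-c) / a ^ 2 * distortionIntegrand p φ d r) := by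
        simp only [mul_sub, div_eq_mul_inv (c + 1)]
        rw [integral_sub ((hinv.const_mul _).const_mul _) ((hint.const_mul _).const_mul _)]
        simp only [integral_const_mul]
    _ ≤ ∫ r in Ioo a b, d r / φ r := by
        refine integral_mono_ae (((hinv.const_mul _).sub (hint.const_mul _)).const_mul _)
          hlogderiv ?_
        filter_upwards [hd, ae_restrict_mem measurableSet_Ioo] with r hdr hr
        exact le_div_of_distortionIntegrand hp hc ha hr.1.le (hφ r (Ioo_subset_Icc_self hr)) hdr
    _ = log (φ b) - log (φ a) := hftc

end Annulus

section UnitInterval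

variable {p C : ℝ} {φ d : ℝ → ℝ}

lemma one_le_integral_distortionIntegrand (hp : 0 ≤ p)
    (hφ : ∀ r ∈ Ioo (0 : ℝ) 1, 0 ≤ φ r) (hd : ∀ᵐ r ∂volume.restrict (Ioo (0 : ℝ) 1), 0 ≤ d r)
    (hint : IntegrableOn (distortionIntegrand p φ d) (Ioo 0 1)) :
    1 ≤ ∫ r in Ioo (0 : ℝ) 1, distortionIntegrand p φ d r := by
  have hid : ∫ r in Ioo (0 : ℝ) 1, 2 * r = 1 := by
    rw [← integral_Ioc_eq_integral_Ioo, ← intervalIntegral.integral_of_le zero_le_one,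
      intervalIntegral.integral_const_mul, integral_id]
    norm_num
  refine hid.symm.trans_le <| integral_mono_ae
    ((continuous_const.mul continuous_id).integrableOn_Icc.mono_set Ioo_subset_Icc_self) hint ?_
  filter_upwards [hd, ae_restrict_mem measurableSet_Ioo] with r hdr hr
  exact two_mul_le_distortionIntegrand hp hr.1.le (hφ r hr) hdr

theorem div_le_log_sub_log_exp_neg (hp : 0 < p) (hC₁ : 1 ≤ C)
    (hφ : ∀ r ∈ Ioc (0 : ℝ) 1, 0 < φ r) (hcont : ContinuousOn φ (Icc 0 1))
    (hderiv : ∀ r ∈ Ioo (0 : ℝ) 1, HasDerivAt φ (d r) r)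
    (hd : ∀ᵐ r ∂volume.restrict (Ioo (0 : ℝ) 1), 0 < d r)
    (hint : IntegrableOn (distortionIntegrand p φ d) (Ioo 0 1))
    (hC : ∫ r in Ioo (0 : ℝ) 1, distortionIntegrand p φ d r ≤ C) (j : ℕ) :
    p / (log C + 2 * ((j : ℝ) + 1)) ≤
      log (φ (exp (-(j : ℝ)))) - log (φ (exp (-((j + 1 : ℕ) : ℝ)))) := by
  have hb1 : exp (-(j : ℝ)) ≤ 1 := exp_le_one_iff.mpr (by simp)
  have hIcc : Icc (exp (-((j + 1 : ℕ) : ℝ))) (exp (-(j : ℝ))) ⊆ Ioc 0 1 := fun r hr =>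
    ⟨(exp_pos _).trans_le hr.1, hr.2.trans hb1⟩
  have hIoo : Ioo (exp (-((j + 1 : ℕ) : ℝ))) (exp (-(j : ℝ))) ⊆ Ioo 0 1 := fun r hr =>
    ⟨(exp_pos _).trans hr.1, hr.2.trans_le hb1⟩
  refine div_le_log_sub_log_of_distortionIntegrand hp (by linarith [log_nonneg hC₁]) (exp_pos _)
    (by rw [← exp_add]; push_cast; ring_nf) (fun r hr => hφ r (hIcc hr))
    (hcont.mono (hIcc.trans Ioc_subset_Icc_self)) (fun r hr => hderiv r (hIoo hr))
    (ae_restrict_of_ae_restrict_of_subset hIoo hd) (hint.mono_set hIoo) ?_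
  calc ∫ r in Ioo (exp (-((j + 1 : ℕ) : ℝ))) (exp (-(j : ℝ))), distortionIntegrand p φ d r
      ≤ ∫ r in Ioo (0 : ℝ) 1, distortionIntegrand p φ d r :=
        setIntegral_mono_set hint
          ((ae_restrict_mem measurableSet_Ioo).mono fun r hr => distortionIntegrand_nonneg hr.1.le)
          hIoo.eventuallyLE
    _ ≤ C := hC
    _ = exp (-((j + 1 : ℕ) : ℝ)) ^ 2 * exp (log C + 2 * ((j : ℝ) + 1)) := by
        rw [sq, ← exp_add, ← exp_add, show -((j + 1 : ℕ) : ℝ) + -((j + 1 : ℕ) : ℝ) +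
          (log C + 2 * ((j : ℝ) + 1)) = log C by push_cast; ring, exp_log (by linarith)]

end UnitInterval

theorem stmt15_general (p C₀ : ℝ) (hp : 0 < p) (φ d : ℝ → ℝ)
    (hmono : StrictMonoOn φ (Set.Icc 0 1)) (hcont : ContinuousOn φ (Set.Icc 0 1))
    (hφ0 : φ 0 = 0) (hφ1 : φ 1 = 1)
    (hderiv : ∀ r ∈ Set.Ioo (0:ℝ) 1, HasDerivAt φ (d r) r)
    (hdpos : ∀ᵐ r ∂(volume.restrict (Set.Ioo (0:ℝ) 1)), 0 < d r)
    (hint : IntegrableOn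
      (fun r => (Real.exp (p * r * d r / φ r) + Real.exp (p * φ r / (r * d r))) * r)
      (Set.Ioo 0 1))
    (hC₀ : ∫ r in Set.Ioo (0:ℝ) 1,
      (Real.exp (p * r * d r / φ r) + Real.exp (p * φ r / (r * d r))) * r = C₀) :
    ∃ C : ℝ, ∀ n : ℕ, 1 ≤ n → φ (Real.exp (-(n:ℝ))) ≤ C * (n : ℝ) ^ (-(p/2)) := by
  have hφpos : ∀ r ∈ Ioc (0 : ℝ) 1, 0 < φ r := fun r hr =>
    hφ0 ▸ hmono (left_mem_Icc.mpr zero_le_one) (Ioc_subset_Icc_self hr) hr.1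
  have hC₀one : 1 ≤ C₀ := hC₀ ▸ one_le_integral_distortionIntegrand hp.le
    (fun r hr => (hφpos r (Ioo_subset_Ioc_self hr)).le) (hdpos.mono fun r h => h.le) hint
  exact ⟨_, fun n hn => le_rpow_neg_of_le_log_sub_log hp.le (by linarith [log_nonneg hC₀one])
    (fun n => hφpos _ ⟨exp_pos _, exp_le_one_iff.mpr (by simp)⟩) (by simp [hφ1])
    (div_le_log_sub_log_exp_neg hp hC₀one hφpos hcont hderiv hdpos hint hC₀.le) hn⟩

theorem stmt15 (p C₀ : ℝ) (hp : 0 < p) (φ d : ℝ → ℝ)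
    (hmono : StrictMonoOn φ (Set.Icc 0 1)) (hcont : ContinuousOn φ (Set.Icc 0 1))
    (hφ0 : φ 0 = 0) (hφ1 : φ 1 = 1)
    (hderiv : ∀ r ∈ Set.Ioo (0:ℝ) 1, HasDerivAt φ (d r) r)
    (hdpos : ∀ᵐ r ∂(volume.restrict (Set.Ioo (0:ℝ) 1)), 0 < d r)
    (hAC : ∀ a ∈ Set.Icc (0:ℝ) 1, ∀ b ∈ Set.Icc (0:ℝ) 1, a ≤ b →
      φ b - φ a = ∫ r in a..b, d r)
    (hint : IntegrableOn
      (fun r => (Real.exp (p * r * d r / φ r) + Real.exp (p * φ r / (r * d r))) * r)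
      (Set.Ioo 0 1))
    (hC₀ : ∫ r in Set.Ioo (0:ℝ) 1,
      (Real.exp (p * r * d r / φ r) + Real.exp (p * φ r / (r * d r))) * r = C₀) :
    ∃ C : ℝ, ∀ n : ℕ, 1 ≤ n → φ (Real.exp (-(n:ℝ))) ≤ C * (n : ℝ) ^ (-(p/2)) :=
  stmt15_general p C₀ hp φ d hmono hcont hφ0 hφ1 hderiv hdpos hint hC₀
end

section
/- Let p > 0, n ≥ 1, and φ as above with exponential distortion constant C₀. Then ∫_{e^(−n)}^{e^(1−n)} (r·φ'(r)/φ(r))² · dr/r ≤ p^(−2)·(log C₀ + 2n + p)² − 1. -/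
/-!
Write `u = p r φ'/φ ≥ 0` and `m = log C₀ + 2n ≥ 1`. On `[e, ∞)` the function `w ↦ (log w)²` is
concave, so its tangent at `w = e^m` bounds `u²` by an affine function of `e^u`, up to a small slack
for small `u`. Integrating against the probability measure `dr/r` on `(e^{-n}, e^{1-n})`, where
`1/r ≤ e^{2n} r`, gives `∫ (e^u - 1) dr/r ≤ e^{2n} ∫₀¹ (e^u - 1) r dr ≤ e^{2n} (C₀ - 1/2)`.
Since `e^{-m} e^{2n} C₀ = 1`, the saving `-1/2` absorbs the slack and `∫ u² dr/r ≤ m²`, which is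
stronger than the claim.
-/

open Real MeasureTheory Set

theorem two_sub_le_two_add_mul_exp_neg {t : ℝ} (ht : 0 ≤ t) : 2 - t ≤ (2 + t) * exp (-t) := by
  have hmono : Monotone fun x : ℝ => (2 + x) * exp (-x) + x := by
    refine monotone_of_hasDerivAt_nonneg (f' := fun x => 1 - (1 + x) * exp (-x)) (fun x => ?_) ?_
    · exact ((((hasDerivAt_id' x).const_add 2).fun_mul (hasDerivAt_neg x).exp).fun_add
        (hasDerivAt_id' x)).congr_deriv (by ring)
    · intro x
      have h := mul_le_mul_of_nonneg_right (add_one_le_exp x) (exp_pos (-x)).le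
      rw [← exp_add, add_neg_cancel, exp_zero] at h
      simp only [Pi.zero_apply]; linarith
  simpa using hmono ht

theorem sq_le_exp_tangent {v m : ℝ} (hv : 0 ≤ v) (hm : 1 ≤ m) :
    v ^ 2 ≤ m ^ 2 - 2 * m + 2 * m * exp (v - m) + m * exp (2 - m) / 2 := by
  have hslack : 0 ≤ m * exp (2 - m) / 2 := by positivity
  rcases le_total m v with hmv | hvm
  · have hq := quadratic_le_exp_of_nonneg (sub_nonneg.2 hmv)
    nlinarith [mul_le_mul_of_nonneg_left hq (by linarith : (0:ℝ) ≤ 2 * m),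
      mul_nonneg (sub_nonneg.2 hm) (sq_nonneg (v - m))]
  · obtain ⟨t, ht, rfl⟩ : ∃ t, 0 ≤ t ∧ v = m - t := ⟨m - v, by linarith, by ring⟩
    rw [show m - t - m = -t by ring]
    have hw : 0 ≤ exp (-t) + t - 1 := by linarith [add_one_le_exp (-t)]
    have hpade : t ^ 2 ≤ (2 + t) * (exp (-t) + t - 1) := by
      nlinarith [two_sub_le_two_add_mul_exp_neg ht]
    rcases le_total (2 + t) (2 * m) with h2m | h2m
    · nlinarith [mul_le_mul_of_nonneg_right h2m hw]
    · have hm2 : m ≤ 2 := by linarith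
      have hcubic : t ^ 2 * (2 + t - 2 * m) ≤ m ^ 2 * (2 - m) := by
        nlinarith [mul_nonneg (by linarith : (0:ℝ) ≤ m - t)
          (by nlinarith : (0:ℝ) ≤ t ^ 2 + (2 - m) * t + (2 - m) * m)]
      have hexp : m * (2 - m) ≤ exp (2 - m) := by
        nlinarith [add_one_le_exp (2 - m), sq_nonneg (m - 1)]
      nlinarith [mul_le_mul_of_nonneg_left hexp (by linarith : (0:ℝ) ≤ m),
        mul_le_mul_of_nonneg_left hpade (by linarith : (0:ℝ) ≤ 2 * m)]

theorem one_div_le_exp_two_mul_mul {r s : ℝ} (hr : exp (-s) ≤ r) : 1 / r ≤ exp (2 * s) * r := by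
  have hr0 : 0 < r := (exp_pos _).trans_le hr
  have hsq : exp (-(2 * s)) ≤ r * r := by
    rw [show -(2 * s) = -s + -s by ring, exp_add]
    exact mul_le_mul hr hr (exp_pos _).le hr0.le
  have h := mul_le_mul_of_nonneg_left hsq (exp_pos (2 * s)).le
  rw [← exp_add, add_neg_cancel, exp_zero] at h
  rwa [div_le_iff₀ hr0, mul_assoc]

theorem integral_one_div_Ioo_exp_neg (s : ℝ) :
    ∫ r in Ioo (exp (-s)) (exp (1 - s)), 1 / r = 1 := by
  rw [← integral_Ioc_eq_integral_Ioo,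
    ← intervalIntegral.integral_of_le (exp_le_exp.2 (by linarith)), integral_one_div_of_pos (exp_pos _) (exp_pos _), ← exp_sub]
  simp

theorem integral_Ioo_zero_one_id : ∫ r in Ioo (0:ℝ) 1, r = 1 / 2 := by
  rw [← integral_Ioc_eq_integral_Ioo, ← intervalIntegral.integral_of_le zero_le_one, integral_id]
  norm_num

theorem setIntegral_exp_mul_sub_le {u : ℝ → ℝ} {C : ℝ}
    (hint : IntegrableOn (fun r => exp (u r) * r) (Ioo 0 1))
    (hC : ∫ r in Ioo 0 1, exp (u r) * r ≤ C) :
    ∫ r in Ioo 0 1, (exp (u r) * r - r) ≤ C - 1 / 2 := by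
  rw [integral_sub hint (continuous_id'.integrableOn_Icc.mono_set Ioo_subset_Icc_self),
    integral_Ioo_zero_one_id]
  linarith

theorem exp_mul_sub_nonneg_ae {u : ℝ → ℝ} (hu : ∀ᵐ r ∂volume.restrict (Ioo 0 1), 0 ≤ u r) :
    ∀ᵐ r ∂volume.restrict (Ioo 0 1), 0 ≤ exp (u r) * r - r := by
  filter_upwards [hu, ae_restrict_mem measurableSet_Ioo] with r hur hr
  nlinarith [one_le_exp hur, hr.1]

theorem one_half_le_of_setIntegral_exp_mul_le {u : ℝ → ℝ} {C : ℝ}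
    (hu : ∀ᵐ r ∂volume.restrict (Ioo 0 1), 0 ≤ u r)
    (hint : IntegrableOn (fun r => exp (u r) * r) (Ioo 0 1))
    (hC : ∫ r in Ioo 0 1, exp (u r) * r ≤ C) : 1 / 2 ≤ C := by
  linarith [setIntegral_exp_mul_sub_le hint hC,
    setIntegral_nonneg_of_ae_restrict (exp_mul_sub_nonneg_ae hu)]

theorem one_le_log_add_two_mul {C s : ℝ} (hC : 1 / 2 ≤ C) (hs : 1 ≤ s) : 1 ≤ log C + 2 * s := by
  have := log_le_log (by norm_num) hC
  rw [one_div, log_inv] at this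
  linarith [log_two_lt_d9]

theorem sq_mul_one_div_le_of_exp_neg_le {v m r s : ℝ} (hv : 0 ≤ v) (hm : 1 ≤ m)
    (hr : exp (-s) ≤ r) :
    v ^ 2 * (1 / r) ≤ (m ^ 2 - 2 * m + m * exp (2 - m) / 2 + 2 * m * exp (-m)) * (1 / r)
      + 2 * m * exp (-m) * exp (2 * s) * (exp v * r - r) := by
  have hr0 : 0 < r := (exp_pos _).trans_le hr
  have htan := sq_le_exp_tangent hv hm
  rw [show v - m = v + -m by ring, exp_add] at htan
  have hinv := mul_le_mul_of_nonneg_left (one_div_le_exp_two_mul_mul hr)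
    (mul_nonneg (by positivity : 0 ≤ 2 * m * exp (-m)) (sub_nonneg.2 (one_le_exp hv)))
  calc v ^ 2 * (1 / r)
      ≤ (m ^ 2 - 2 * m + m * exp (2 - m) / 2 + 2 * m * exp (-m) + 2 * m * exp (-m) * (exp v - 1))
        * (1 / r) := mul_le_mul_of_nonneg_right (by linarith) (one_div_pos.2 hr0).le
    _ ≤ (m ^ 2 - 2 * m + m * exp (2 - m) / 2 + 2 * m * exp (-m)) * (1 / r)
        + 2 * m * exp (-m) * (exp v - 1) * (exp (2 * s) * r) := by linarith
    _ = _ := by ring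

theorem setIntegral_sq_mul_one_div_le {u : ℝ → ℝ} {C s : ℝ} (hs : 1 ≤ s)
    (hu : ∀ᵐ r ∂volume.restrict (Ioo 0 1), 0 ≤ u r)
    (hint : IntegrableOn (fun r => exp (u r) * r) (Ioo 0 1))
    (hC : ∫ r in Ioo 0 1, exp (u r) * r ≤ C) :
    ∫ r in Ioo (exp (-s)) (exp (1 - s)), u r ^ 2 * (1 / r) ≤ (log C + 2 * s) ^ 2 := by
  set m := log C + 2 * s
  set A := m ^ 2 - 2 * m + m * exp (2 - m) / 2 + 2 * m * exp (-m) with hA_def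
  set lam := 2 * m * exp (-m) * exp (2 * s) with hlam_def
  have hC2 := one_half_le_of_setIntegral_exp_mul_le hu hint hC
  have hm : 1 ≤ m := one_le_log_add_two_mul hC2 hs
  have hlam : 0 ≤ lam := by have := exp_pos (-m); positivity
  have hshell : Ioo (exp (-s)) (exp (1 - s)) ⊆ Ioo 0 1 := fun r hr =>
    ⟨(exp_pos _).trans hr.1, hr.2.trans_le (exp_le_one_iff.2 (by linarith))⟩
  have hexcess : IntegrableOn (fun r => exp (u r) * r - r) (Ioo 0 1) :=
    hint.sub (continuous_id'.integrableOn_Icc.mono_set Ioo_subset_Icc_self)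
  have hinv : IntegrableOn (fun r => 1 / r) (Ioo (exp (-s)) (exp (1 - s))) :=
    (continuousOn_const.div continuousOn_id fun r hr => ((exp_pos _).trans_le hr.1).ne')
      |>.integrableOn_Icc.mono_set Ioo_subset_Icc_self
  have hone : exp (-m) * exp (2 * s) * C = 1 := by
    rw [show -m = -log C + -(2 * s) by ring, exp_add, exp_neg, exp_log (by linarith), exp_neg]
    field_simp
  calc ∫ r in Ioo (exp (-s)) (exp (1 - s)), u r ^ 2 * (1 / r)
      ≤ ∫ r in Ioo (exp (-s)) (exp (1 - s)), (A * (1 / r) + lam * (exp (u r) * r - r)) := by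
        refine integral_mono_of_nonneg ?_ ((hinv.const_mul _).add
          ((hexcess.mono_set hshell).const_mul _)) ?_
        · filter_upwards [ae_restrict_mem measurableSet_Ioo] with r hr
          have := (exp_pos _).trans hr.1
          positivity
        · filter_upwards [ae_restrict_of_ae_restrict_of_subset hshell hu,
            ae_restrict_mem measurableSet_Ioo] with r hur hr
          exact sq_mul_one_div_le_of_exp_neg_le hur hm hr.1.le
    _ = A + lam * ∫ r in Ioo (exp (-s)) (exp (1 - s)), (exp (u r) * r - r) := by
        rw [integral_add (hinv.const_mul _) ((hexcess.mono_set hshell).const_mul _),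
          integral_const_mul, integral_const_mul, integral_one_div_Ioo_exp_neg, mul_one]
    _ ≤ A + lam * (C - 1 / 2) := by
        refine add_le_add_right (mul_le_mul_of_nonneg_left ?_ hlam) _
        exact (setIntegral_mono_set hexcess (exp_mul_sub_nonneg_ae hu)
          hshell.eventuallyLE).trans (setIntegral_exp_mul_sub_le hint hC)
    _ = m ^ 2 - m * exp (-m) * (exp (2 * s) - exp 2 / 2 - 2) := by
        rw [hA_def, hlam_def, show 2 - m = 2 + -m by ring, exp_add]
        linear_combination (2 * m) * hone
    _ ≤ m ^ 2 := by
        have hE : exp 2 ≤ exp (2 * s) := exp_le_exp.2 (by linarith)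
        have h5 : 5 ≤ exp 2 := by nlinarith [quadratic_le_exp_of_nonneg (zero_le_two (α := ℝ))]
        nlinarith [mul_nonneg (mul_nonneg (by linarith : 0 ≤ m) (exp_pos (-m)).le)
          (by linarith : 0 ≤ exp (2 * s) - exp 2 / 2 - 2)]

theorem stmt16_general (p C₀ : ℝ) (hp : 0 < p) (φ d : ℝ → ℝ)
    (hmono : StrictMonoOn φ (Set.Icc 0 1))
    (hφ0 : φ 0 = 0)
    (hdpos : ∀ᵐ r ∂(volume.restrict (Set.Ioo (0:ℝ) 1)), 0 < d r)
    (hint : IntegrableOn (fun r => Real.exp (p * r * d r / φ r) * r) (Set.Ioo 0 1))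
    (hC₀ : ∫ r in Set.Ioo (0:ℝ) 1, Real.exp (p * r * d r / φ r) * r ≤ C₀)
    (n : ℕ) (hn : 1 ≤ n) :
    ∫ r in Set.Ioo (Real.exp (-(n:ℝ))) (Real.exp (1 - n)),
        (r * d r / φ r) ^ 2 * (1 / r) ≤
      p ^ (-(2:ℤ)) * (Real.log C₀ + 2 * n + p) ^ 2 - 1 := by
  have hu : ∀ᵐ r ∂volume.restrict (Ioo 0 1), 0 ≤ p * r * d r / φ r := by
    filter_upwards [hdpos, ae_restrict_mem measurableSet_Ioo] with r hd hr
    have hφ : 0 < φ r := by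
      simpa [hφ0] using hmono (left_mem_Icc.2 zero_le_one) (Ioo_subset_Icc_self hr) hr.1
    have := hr.1
    positivity
  have hs : (1 : ℝ) ≤ n := by exact_mod_cast hn
  have hm := one_le_log_add_two_mul (one_half_le_of_setIntegral_exp_mul_le hu hint hC₀) hs
  calc ∫ r in Ioo (exp (-(n:ℝ))) (exp (1 - n)), (r * d r / φ r) ^ 2 * (1 / r)
      = (p ^ 2)⁻¹ * ∫ r in Ioo (exp (-(n:ℝ))) (exp (1 - n)), (p * r * d r / φ r) ^ 2 * (1 / r) := by
        rw [← integral_const_mul]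
        congr 1 with r
        field_simp
    _ ≤ (p ^ 2)⁻¹ * (log C₀ + 2 * n) ^ 2 := by
        gcongr
        exact setIntegral_sq_mul_one_div_le hs hu hint hC₀
    _ ≤ p ^ (-(2:ℤ)) * (log C₀ + 2 * n + p) ^ 2 - 1 := by
        rw [zpow_neg, zpow_ofNat]
        field_simp
        nlinarith

theorem stmt16 (p C₀ : ℝ) (hp : 0 < p) (φ d : ℝ → ℝ)
    (hmono : StrictMonoOn φ (Set.Icc 0 1)) (hcont : ContinuousOn φ (Set.Icc 0 1))
    (hφ0 : φ 0 = 0) (hφ1 : φ 1 = 1)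
    (hderiv : ∀ r ∈ Set.Ioo (0:ℝ) 1, HasDerivAt φ (d r) r)
    (hdpos : ∀ᵐ r ∂(volume.restrict (Set.Ioo (0:ℝ) 1)), 0 < d r)
    (hAC : ∀ a ∈ Set.Icc (0:ℝ) 1, ∀ b ∈ Set.Icc (0:ℝ) 1, a ≤ b →
      φ b - φ a = ∫ r in a..b, d r)
    (hint : IntegrableOn (fun r => Real.exp (p * r * d r / φ r) * r) (Set.Ioo 0 1))
    (hC₀ : ∫ r in Set.Ioo (0:ℝ) 1, Real.exp (p * r * d r / φ r) * r ≤ C₀)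
    (n : ℕ) (hn : 1 ≤ n) :
    ∫ r in Set.Ioo (Real.exp (-(n:ℝ))) (Real.exp (1 - n)),
        (r * d r / φ r) ^ 2 * (1 / r) ≤
      p ^ (-(2:ℤ)) * (Real.log C₀ + 2 * n + p) ^ 2 - 1 :=
  stmt16_general p C₀ hp φ d hmono hφ0 hdpos hint hC₀ n hn
end
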